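/- For 1 ≤ i ≤ n−1 let T_i denote the operator on formal power series in the variables y_1, y_2, … over R(T) that applies the Demazure operator f ↦ (1 − e^{a_i − a_{i+1}})^{−1}·(s_i(f) − f) to each coefficient, where s_i exchanges e^{a_i} and e^{a_{i+1}}. Then for every 1 ≤ l ≤ n−1, T_l T_{l−1} ⋯ T_1 (Ω(b_1|y)) = e^{−(a_1 + ⋯ + a_l)} · Σ_{r ≥ 0} h_r(b_1, …, b_{l+1}) · h_{l+r}(y), where h_r(b_1,…,b_{l+1}) ∈ R(T) is the complete homogeneous symmetric polynomial of degree r in b_1,…,b_{l+1}, and h_m(y) is the power series equal to the sum of all monomials of total degree m in the y-variables. -/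

import Mathlib

noncomputable section

/-- `R(T) = ℤ[e^{±a_1},…,e^{±a_n}]`, the group algebra over `ℤ` of the free abelian
group `ℤⁿ` of characters. -/
abbrev RT (n : ℕ) : Type := AddMonoidAlgebra ℤ (Fin n →₀ ℤ)

instance (n : ℕ) : IsDomain (RT n) := NoZeroDivisors.to_isDomain _

/-- `e^λ` for a character `λ`. -/
def eexp (n : ℕ) (lam : Fin n →₀ ℤ) : RT n := AddMonoidAlgebra.single lam 1

/-- `b_i = 1 - e^{-a_i}`. -/
def bb (n : ℕ) (i : Fin n) : RT n := 1 - eexp n (-(Finsupp.single i 1))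

/-- The ring automorphism of `R(T)` induced by a permutation of the variables:
`e^{a_i} ↦ e^{a_{σ(i)}}`. -/
def permRT (n : ℕ) (σ : Equiv.Perm (Fin n)) : RT n ≃ₐ[ℤ] RT n :=
  AddMonoidAlgebra.domCongr ℤ ℤ (Finsupp.domCongr (σ : Fin n ≃ Fin n))

/-- Index set of the variables `z_{ij}`, `1 ≤ i ≤ j ≤ n`. -/
abbrev Idx (n : ℕ) : Type := {p : Fin n × Fin n // p.1 ≤ p.2}

/-- An element of `Idx n` from natural-number data. -/
def mkIdx (n : ℕ) (a b : ℕ) (ha : a < n) (hb : b < n) (hab : a ≤ b) : Idx n :=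
  ⟨(⟨a, ha⟩, ⟨b, hb⟩), Fin.mk_le_mk.mpr hab⟩

/-- The defining relation `(b_i - b_j)·z_{ij} - z_{i,j-1} + z_{i+1,j}` (0-based indices). -/
def relGen (n : ℕ) (i j : ℕ) (hi : i < n) (hj : j < n) (hij : i < j) :
    MvPolynomial (Idx n) (RT n) :=
  MvPolynomial.C (bb n ⟨i, hi⟩ - bb n ⟨j, hj⟩) * MvPolynomial.X (mkIdx n i j hi hj hij.le)
    - MvPolynomial.X (mkIdx n i (j - 1) hi (by omega) (by omega))
    + MvPolynomial.X (mkIdx n (i + 1) j (by omega) hj (by omega))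

/-- The ideal of relations of the centralizer family. -/
def centIdeal (n : ℕ) : Ideal (MvPolynomial (Idx n) (RT n)) :=
  Ideal.span {f | ∃ (i j : ℕ) (hi : i < n) (hj : j < n) (hij : i < j), f = relGen n i j hi hj hij}

/-- The ring `R = R(T)[z_{ij}]/I`. -/
abbrev centRing (n : ℕ) : Type := MvPolynomial (Idx n) (RT n) ⧸ centIdeal n

/-- The class of the generator `z_{ij}` in `R` (0-based indices). -/
def zbar (n : ℕ) (i j : ℕ) (hi : i < n) (hj : j < n) (hij : i ≤ j) : centRing n :=
  Ideal.Quotient.mk (centIdeal n) (MvPolynomial.X (mkIdx n i j hi hj hij))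


/-- `Ω(b|y)`: the formal power series in `y_1, y_2, …` whose coefficient on each monomial of
total degree `d` is `b^d`, i.e. `∏_{j ≥ 1} (1 - b y_j)⁻¹`. -/
def Omg (n : ℕ) (b : RT n) : MvPowerSeries ℕ (RT n) :=
  fun d => b ^ (d.sum fun _ k => k)

/-- The complete homogeneous symmetric polynomial of degree `r` in the values `x_1,…,x_k`. -/
def hsym {R : Type*} [CommSemiring R] {k : ℕ} (x : Fin k → R) (r : ℕ) : R :=
  ∑ s : Sym (Fin k) r, ((s : Multiset (Fin k)).map x).prod

/-- Iterated coefficientwise application: `demIter T F0 l = T_l(T_{l-1}(⋯ T_1(F0)⋯))`,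
where each `T_i` acts on a power series coefficient by coefficient. -/
def demIter (n : ℕ) (T : ℕ → RT n →ₗ[ℤ] RT n) (F0 : MvPowerSeries ℕ (RT n)) :
    ℕ → MvPowerSeries ℕ (RT n)
  | 0 => F0
  | m + 1 => fun d => T (m + 1) (demIter n T F0 m d)

/-!
Let `H(x_1,…,x_k) = ∏ (1 - x_i t)⁻¹`, the generating function of the `h_r(x)`. The claimed
coefficient of a degree-`m` monomial is the `t^m`-coefficient of
`e^{-(a_1+⋯+a_l)} t^l H(b_1,…,b_{l+1})`, which for `l = 0` is the coefficient `b_1^m` of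
`Ω(b_1|y)`; so induct on `l`. The transposition `s_{l+1}` fixes `e^{-(a_1+⋯+a_l)}` and
`b_1,…,b_l` and sends `b_{l+1}` to `b_{l+2}`; by
`(1 - vt)⁻¹ - (1 - ut)⁻¹ = (v - u) t (1 - ut)⁻¹ (1 - vt)⁻¹`, applying `s_{l+1} - 1` to the
level-`l` series multiplies it by `(b_{l+2} - b_{l+1}) t` and adjoins `b_{l+2}` to `H`. Since
`(1 - e^{a_{l+1} - a_{l+2}}) e^{-a_{l+1}} = b_{l+2} - b_{l+1}` and `R(T)` is a domain, dividing by
the Demazure denominator gives the level-`(l+1)` series.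
-/

open PowerSeries

section GeneratingFunction

variable {R S : Type*} [CommRing R] [CommRing S]

def geomSeries (u : R) : R⟦X⟧ := rescale u (mk 1)

@[simp]
lemma coeff_geomSeries (u : R) (j : ℕ) : coeff j (geomSeries u) = u ^ j := by
  simp [geomSeries, coeff_rescale]

lemma map_geomSeries (φ : R →+* S) (u : R) : map φ (geomSeries u) = geomSeries (φ u) := by
  ext j; simp

lemma geomSeries_mul_one_sub (u : R) : geomSeries u * (1 - C u * X) = 1 := by
  simpa [geomSeries, rescale_X] using congrArg (rescale u) (mk_one_mul_one_sub_eq_one (S := R))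

lemma geomSeries_sub_geomSeries (u v : R) :
    geomSeries v - geomSeries u = C (v - u) * X * (geomSeries u * geomSeries v) := by
  rw [map_sub]
  linear_combination
    geomSeries u * geomSeries_mul_one_sub v - geomSeries v * geomSeries_mul_one_sub u

def hsymSeries {k : ℕ} (x : Fin k → R) : R⟦X⟧ := ∏ i, geomSeries (x i)

lemma coeff_hsymSeries {k : ℕ} (x : Fin k → R) (r : ℕ) :
    coeff r (hsymSeries x) = hsym x r := by
  classical
  simp only [hsymSeries, coeff_prod, coeff_geomSeries, hsym]
  symm
  refine Finset.sum_bij' (fun s _ => Multiset.toFinsupp (s : Multiset (Fin k)))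
    (fun P hP => ⟨Finsupp.toMultiset P, ?_⟩) ?_ ?_ ?_ ?_ ?_
  · rw [Finset.mem_finsuppAntidiag] at hP
    rw [Finsupp.card_toMultiset, ← hP.1, Finsupp.sum_fintype _ _ fun _ => rfl]
    simp
  · intro s _
    rw [Finset.mem_finsuppAntidiag]
    refine ⟨?_, Finset.subset_univ _⟩
    have h := Multiset.toFinsupp_sum_eq (s : Multiset (Fin k))
    rw [Finsupp.sum_fintype _ _ fun _ => rfl] at h
    exact h.trans s.2
  · intros; exact Finset.mem_univ _
  · intro s _; exact Sym.coe_injective (by simp)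
  · intros; simp
  · intro s _
    rw [Finset.prod_multiset_map_count]
    refine Finset.prod_subset (Finset.subset_univ _) fun i _ hi => ?_
    rw [Multiset.count_eq_zero.mpr (mt Multiset.mem_toFinset.mpr hi), pow_zero]

lemma hsymSeries_snoc {k : ℕ} (x : Fin k → R) (u : R) :
    hsymSeries (Fin.snoc x u) = hsymSeries x * geomSeries u := by
  simp [hsymSeries, Fin.prod_univ_castSucc]

lemma map_hsymSeries (φ : R →+* S) {k : ℕ} (x : Fin k → R) :
    map φ (hsymSeries x) = hsymSeries (φ ∘ x) := by
  simp [hsymSeries, map_geomSeries]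

lemma hsymSeries_snoc_sub_snoc {k : ℕ} (x : Fin k → R) (u v : R) :
    hsymSeries (Fin.snoc x v) - hsymSeries (Fin.snoc x u)
      = C (v - u) * X * hsymSeries (Fin.snoc (Fin.snoc x u) v) := by
  simp only [hsymSeries_snoc, ← mul_sub, geomSeries_sub_geomSeries]
  ring

end GeneratingFunction

section DemazureStep

variable {R : Type*} [CommRing R]

lemma demazure_apply_coeff_hsymSeries_snoc (σ : R →+* R) (T : R → R) {c : R}
    (hc : IsLeftRegular c) (hT : ∀ f, c * T f = σ f - f) {E w u v : R} {k : ℕ} {x : Fin k → R}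
    (hE : σ E = E) (hx : σ ∘ x = x) (hu : σ u = v) (hw : c * w = v - u) (l m : ℕ) :
    T (coeff m (C E * X ^ l * hsymSeries (Fin.snoc x u)))
      = coeff m (C (E * w) * X ^ (l + 1) * hsymSeries (Fin.snoc (Fin.snoc x u) v)) := by
  refine hc (?_ : c * _ = c * _)
  have hmap : map σ (C E * X ^ l * hsymSeries (Fin.snoc x u))
      = C E * X ^ l * hsymSeries (Fin.snoc x v) := by
    simp [map_hsymSeries, Fin.comp_snoc, hE, hx, hu]
  rw [hT, ← coeff_map, ← map_sub, hmap, ← mul_sub, hsymSeries_snoc_sub_snoc, ← coeff_C_mul,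
    ← hw]
  congr 1
  simp only [map_mul]
  ring

end DemazureStep

section CharacterRing

variable {n : ℕ}

lemma eexp_zero : eexp n 0 = 1 := rfl

lemma eexp_add (μ ν : Fin n →₀ ℤ) : eexp n (μ + ν) = eexp n μ * eexp n ν := by
  simp [eexp, AddMonoidAlgebra.single_mul_single]

lemma permRT_eexp (σ : Equiv.Perm (Fin n)) (μ : Fin n →₀ ℤ) :
    permRT n σ (eexp n μ) = eexp n (Finsupp.domCongr σ μ) := by
  simp [permRT, eexp]

lemma permRT_bb (σ : Equiv.Perm (Fin n)) (i : Fin n) : permRT n σ (bb n i) = bb n (σ i) := by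
  rw [bb, map_sub, map_one, permRT_eexp, map_neg, Finsupp.domCongr_apply,
    Finsupp.equivMapDomain_single]
  rfl

lemma one_sub_eexp_ne_zero {μ : Fin n →₀ ℤ} (hμ : μ ≠ 0) : 1 - eexp n μ ≠ 0 := by
  rw [sub_ne_zero, ne_comm, eexp, AddMonoidAlgebra.one_def, Ne,
    AddMonoidAlgebra.single_left_inj one_ne_zero]
  exact hμ

lemma one_sub_eexp_mul_eexp_neg (i j : Fin n) :
    (1 - eexp n (Finsupp.single i 1 - Finsupp.single j 1)) * eexp n (-Finsupp.single i 1)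
      = bb n j - bb n i := by
  rw [sub_mul, one_mul, ← eexp_add, bb, bb,
    show (Finsupp.single i 1 - Finsupp.single j 1 + -Finsupp.single i 1 : Fin n →₀ ℤ)
      = -Finsupp.single j 1 by abel]
  ring

def bFamily (n k : ℕ) (hk : k ≤ n) : Fin k → RT n := fun t => bb n (Fin.castLE hk t)

def partialCharSum (n l : ℕ) (hl : l ≤ n) : Fin n →₀ ℤ :=
  ∑ t : Fin l, Finsupp.single (Fin.castLE hl t) 1

lemma bFamily_succ {k : ℕ} (hk : k + 1 ≤ n) :
    bFamily n (k + 1) hk = Fin.snoc (bFamily n k (by omega)) (bb n ⟨k, hk⟩) := by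
  funext t
  refine Fin.lastCases ?_ (fun t => ?_) t
  · rw [Fin.snoc_last]; rfl
  · rw [Fin.snoc_castSucc]; rfl

lemma partialCharSum_succ {l : ℕ} (hl : l + 1 ≤ n) :
    partialCharSum n (l + 1) hl
      = partialCharSum n l (by omega) + Finsupp.single ⟨l, hl⟩ 1 := by
  rw [partialCharSum, Fin.sum_univ_castSucc]
  rfl

lemma swap_castLE {l : ℕ} (hl : l ≤ n) {i j : Fin n} (hi : l ≤ i) (hj : l ≤ j) (t : Fin l) :
    Equiv.swap i j (Fin.castLE hl t) = Fin.castLE hl t :=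
  Equiv.swap_apply_of_ne_of_ne (by grind) (by grind)

lemma permRT_swap_comp_bFamily {l : ℕ} (hl : l ≤ n) {i j : Fin n} (hi : l ≤ i)
    (hj : l ≤ j) :
    permRT n (Equiv.swap i j) ∘ bFamily n l hl = bFamily n l hl := by
  funext t
  simp [bFamily, permRT_bb, swap_castLE hl hi hj]

lemma permRT_swap_eexp_partialCharSum {l : ℕ} (hl : l ≤ n) {i j : Fin n} (hi : l ≤ i)
    (hj : l ≤ j) :
    permRT n (Equiv.swap i j) (eexp n (-partialCharSum n l hl))
      = eexp n (-partialCharSum n l hl) := by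
  rw [permRT_eexp, map_neg, partialCharSum, map_sum]
  simp [Finsupp.equivMapDomain_single, swap_castLE hl hi hj]

end CharacterRing

theorem demIter_Omg_eq_coeff {n : ℕ} (T : ℕ → RT n →ₗ[ℤ] RT n)
    (hT : ∀ (i : ℕ) (hi : i + 1 < n) (f : RT n),
      (1 - eexp n (Finsupp.single ⟨i, by omega⟩ 1 - Finsupp.single ⟨i + 1, hi⟩ 1))
          * T (i + 1) f = permRT n (Equiv.swap ⟨i, by omega⟩ ⟨i + 1, hi⟩) f - f)
    (l : ℕ) (hl : l < n) (d : ℕ →₀ ℕ) :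
    demIter n T (Omg n (bb n ⟨0, by omega⟩)) l d
      = coeff (d.sum fun _ k => k)
          (C (eexp n (-partialCharSum n l hl.le)) * X ^ l
            * hsymSeries (bFamily n (l + 1) hl)) := by
  induction l with
  | zero =>
    simp [demIter, Omg, partialCharSum, eexp_zero, hsymSeries, bFamily]
    rfl
  | succ l ih =>
    set σ : RT n →+* RT n := (permRT n (Equiv.swap ⟨l, by omega⟩ ⟨l + 1, hl⟩) :)
    have hσ : ∀ f, (1 - eexp n (Finsupp.single ⟨l, by omega⟩ 1 - Finsupp.single ⟨l + 1, hl⟩ 1))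
        * T (l + 1) f = σ f - f :=
      hT l hl
    have hc : (Finsupp.single (⟨l, by omega⟩ : Fin n) (1 : ℤ) - Finsupp.single ⟨l + 1, hl⟩ 1)
        ≠ 0 := by
      simp [sub_eq_zero, Finsupp.single_eq_single_iff]
    show T (l + 1) (demIter n T _ l d) = _
    rw [ih (by omega), bFamily_succ, bFamily_succ, bFamily_succ, partialCharSum_succ, neg_add,
      eexp_add]
    exact demazure_apply_coeff_hsymSeries_snoc σ (T (l + 1))
      (IsRegular.of_ne_zero (one_sub_eexp_ne_zero hc)).left hσ
      (permRT_swap_eexp_partialCharSum _ le_rfl (Nat.le_succ l))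
      (permRT_swap_comp_bFamily _ le_rfl (Nat.le_succ l))
      (by simp [σ, permRT_bb]) (one_sub_eexp_mul_eexp_neg _ _) l _

/-- with `T_i` (for `1 ≤ i ≤ n-1`) the coefficientwise Demazure operators on
`R(T)[[y_1, y_2, …]]`, one has, for `1 ≤ l ≤ n-1`,
`T_l T_{l-1} ⋯ T_1 (Ω(b_1|y)) = e^{-(a_1+⋯+a_l)} Σ_{r ≥ 0} h_r(b_1,…,b_{l+1}) h_{l+r}(y)`;
the right-hand side is the series whose coefficient on a monomial of total degree `m` is
`e^{-(a_1+⋯+a_l)} h_{m-l}(b_1,…,b_{l+1})` for `m ≥ l`, and `0` otherwise. -/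
theorem stmt16 (n : ℕ) (hn : 2 ≤ n) (T : ℕ → RT n →ₗ[ℤ] RT n)
    (hT : ∀ (i : ℕ) (hi1 : 1 ≤ i) (hi2 : i ≤ n - 1) (f : RT n),
      (1 - eexp n (Finsupp.single ⟨i - 1, by omega⟩ 1 - Finsupp.single ⟨i, by omega⟩ 1)) * T i f
        = permRT n (Equiv.swap ⟨i - 1, by omega⟩ ⟨i, by omega⟩) f - f)
    (l : ℕ) (hl2 : l ≤ n - 1) :
    demIter n T (Omg n (bb n ⟨0, by omega⟩)) l
      = fun d =>
          eexp n (-(∑ m : Fin l, Finsupp.single (⟨(m : ℕ), by have := m.isLt; omega⟩ : Fin n) 1))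
            * (if l ≤ d.sum (fun _ k => k)
                then hsym (fun t : Fin (l + 1) =>
                      bb n ⟨(t : ℕ), by have := t.isLt; omega⟩) (d.sum (fun _ k => k) - l)
                else 0) := by
  funext d
  rw [demIter_Omg_eq_coeff T (fun i hi f => hT (i + 1) (by omega) (by omega) f) l (by omega) d,
    mul_assoc, coeff_C_mul, coeff_X_pow_mul', coeff_hsymSeries]
  rfl
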